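/- arXiv:1906.08771 — 2 statements merged into one kernel-verified Lean document; each statement's English description precedes it below -/
import Mathlib

section
/- Greedy approximation guarantee (Nemhauser–Wolsey–Fisher): Let F : 2^V → ℝ be a normalized (F(∅) = 0), monotone nondecreasing, submodular function on a finite set V, and let k ≤ |V|. Let S_greedy be the set obtained by k steps of the greedy algorithm that at each step adds an element with maximal marginal gain. Then F(S_greedy) ≥ (1 − 1/e) · max{F(S) : S ⊆ V, |S| ≤ k}. -/
/-- Submodular telescoping bound: the gain of adding a whole set is at most the
sum of individual marginal gains. -/
theorem submod_sum_marginals {V : Type*} [Fintype V] [DecidableEq V]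
    (F : Finset V → ℝ)
    (hsub : ∀ A B : Finset V, F (A ∪ B) + F (A ∩ B) ≤ F A + F B)
    (hmono : ∀ A B : Finset V, A ⊆ B → F A ≤ F B)
    (A T : Finset V) :
    F (A ∪ T) ≤ F A + ∑ b ∈ T, (F (insert b A) - F A) := by
  induction T using Finset.induction_on with
  | empty => simp
  | @insert x T hx ih =>
    have h1 := hsub (A ∪ T) (insert x A)
    have h2 : F A ≤ F ((A ∪ T) ∩ insert x A) := by
      apply hmono
      intro y hy
      simp only [Finset.mem_inter, Finset.mem_union, Finset.mem_insert]
      tauto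
    have h3 : (A ∪ T) ∪ insert x A = A ∪ insert x T := by
      ext y
      simp only [Finset.mem_union, Finset.mem_insert]
      tauto
    rw [h3] at h1
    rw [Finset.sum_insert hx]
    linarith

/-- Nemhauser–Wolsey–Fisher greedy approximation guarantee: for a normalized,
monotone, submodular function, `k` steps of greedy achieve `(1 - 1/e)` of the
optimum over sets of cardinality at most `k`. -/
theorem greedy_approximation {V : Type*} [Fintype V] [DecidableEq V]
    (F : Finset V → ℝ)
    (hsub : ∀ A B : Finset V, F (A ∪ B) + F (A ∩ B) ≤ F A + F B)
    (hmono : ∀ A B : Finset V, A ⊆ B → F A ≤ F B)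
    (hnorm : F ∅ = 0)
    (k : ℕ) (hk : k ≤ Fintype.card V)
    (S : ℕ → Finset V) (h0 : S 0 = ∅)
    (hstep : ∀ i < k, ∃ a ∉ S i, S (i + 1) = insert a (S i) ∧
      ∀ b ∉ S i, F (insert b (S i)) - F (S i) ≤ F (insert a (S i)) - F (S i)) :
    ∀ T : Finset V, T.card ≤ k → (1 - 1 / Real.exp 1) * F T ≤ F (S k) := by
  intro T hT
  have hF0 : 0 ≤ F T := by
    rw [← hnorm]; exact hmono _ _ (Finset.empty_subset T)
  rcases Nat.eq_zero_or_pos k with hk0 | hkpos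
  · subst hk0
    have hTe : T = ∅ := Finset.card_eq_zero.mp (Nat.le_zero.mp hT)
    subst hTe
    simp [h0, hnorm]
  · have hkR : (1:ℝ) ≤ (k:ℝ) := by exact_mod_cast hkpos
    have hkpos' : (0:ℝ) < (k:ℝ) := by linarith
    set c : ℝ := 1 - 1/(k:ℝ) with hc
    have hc0 : 0 ≤ c := by
      have : 1/(k:ℝ) ≤ 1 := by
        rw [div_le_one hkpos']; exact hkR
      simp only [hc]; linarith
    have hstep' : ∀ i < k, F T - F (S (i+1)) ≤ c * (F T - F (S i)) := by
      intro i hi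
      obtain ⟨a, ha, hSa, hmax⟩ := hstep i hi
      set g := F (S (i+1)) - F (S i) with hg
      have hg0 : 0 ≤ g := by
        have := hmono (S i) (insert a (S i)) (Finset.subset_insert _ _)
        rw [hg, hSa]; linarith
      have hkey : F T ≤ F (S i) + (k:ℝ) * g := by
        have h1 : F T ≤ F (S i ∪ T) := hmono _ _ Finset.subset_union_right
        have h2 := submod_sum_marginals F hsub hmono (S i) T
        have hsum : ∑ b ∈ T, (F (insert b (S i)) - F (S i)) ≤ (T.card : ℝ) * g := by
          calc ∑ b ∈ T, (F (insert b (S i)) - F (S i)) ≤ ∑ _b ∈ T, g := by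
                apply Finset.sum_le_sum
                intro b hb
                by_cases hbS : b ∈ S i
                · rw [Finset.insert_eq_self.mpr hbS]
                  simpa using hg0
                · rw [hg, hSa]; exact hmax b hbS
            _ = (T.card : ℝ) * g := by rw [Finset.sum_const, nsmul_eq_mul]
        have hcard : (T.card : ℝ) * g ≤ (k:ℝ) * g := by
          apply mul_le_mul_of_nonneg_right _ hg0
          exact_mod_cast hT
        linarith
      have hdiv : (F T - F (S i)) / (k:ℝ) ≤ g := by
        rw [div_le_iff₀ hkpos']
        nlinarith
      have hcexp : c * (F T - F (S i)) = (F T - F (S i)) - (F T - F (S i)) / (k:ℝ) := by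
        rw [hc]; ring
      have : F T - F (S (i+1)) = (F T - F (S i)) - g := by rw [hg]; ring
      rw [this, hcexp]
      linarith
    have hind : ∀ i, i ≤ k → F T - F (S i) ≤ c^i * F T := by
      intro i
      induction i with
      | zero => intro _; simp [h0, hnorm]
      | succ n ih =>
        intro hn
        have h1 := hstep' n (by omega)
        have h2 := ih (by omega)
        calc F T - F (S (n+1)) ≤ c * (F T - F (S n)) := h1
          _ ≤ c * (c^n * F T) := mul_le_mul_of_nonneg_left h2 hc0
          _ = c^(n+1) * F T := by ring
    have hfinal := hind k le_rfl
    have hexp : c^k ≤ 1 / Real.exp 1 := by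
      have h1 : c ≤ Real.exp (-(1/(k:ℝ))) := by
        have := Real.add_one_le_exp (-(1/(k:ℝ)))
        rw [hc]; linarith
      have h2 : c^k ≤ (Real.exp (-(1/(k:ℝ))))^k := pow_le_pow_left₀ hc0 h1 k
      rw [← Real.exp_nat_mul] at h2
      have h3 : (k:ℝ) * (-(1/(k:ℝ))) = -1 := by
        field_simp
      rw [h3, Real.exp_neg] at h2
      simpa [one_div] using h2
    have hmul : c^k * F T ≤ (1 / Real.exp 1) * F T :=
      mul_le_mul_of_nonneg_right hexp hF0
    linarith
end

section
/- Greedy recursion implies the (1 − 1/e) bound: suppose real numbers g₀, g₁, …, g_k with g₀ = 0 satisfy g_{i+1} − g_i ≥ (OPT − g_i)/k for all i < k, where OPT ≥ 0. Then g_k ≥ (1 − (1 − 1/k)^k) · OPT ≥ (1 − 1/e) · OPT. -/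
/-- The greedy recursion implies the `(1 − 1/e)` bound. -/
theorem greedy_recursion_bound (k : ℕ) (hk : 1 ≤ k) (OPT : ℝ) (hOPT : 0 ≤ OPT)
    (g : ℕ → ℝ) (h0 : g 0 = 0)
    (hrec : ∀ i < k, (OPT - g i) / k ≤ g (i + 1) - g i) :
    (1 - (1 - 1 / (k : ℝ)) ^ k) * OPT ≤ g k ∧
    (1 - 1 / Real.exp 1) * OPT ≤ (1 - (1 - 1 / (k : ℝ)) ^ k) * OPT := by
  have hk0 : (0 : ℝ) < k := by positivity
  have hq0 : (0 : ℝ) ≤ 1 - 1 / (k : ℝ) := by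
    have : (1 : ℝ) ≤ (k : ℝ) := by exact_mod_cast hk
    have h2 : 1 / (k:ℝ) ≤ 1 := by
      rw [div_le_one hk0]; linarith
    linarith
  have key : ∀ i ≤ k, OPT - g i ≤ (1 - 1 / (k : ℝ)) ^ i * OPT := by
    intro i hi
    induction i with
    | zero => simp [h0]
    | succ n ih =>
      have hn : n < k := Nat.lt_of_succ_le hi
      have ihn := ih (Nat.le_of_lt hn)
      have hr := hrec n hn
      have : OPT - g (n + 1) ≤ (1 - 1 / (k : ℝ)) * (OPT - g n) := by
        rw [div_le_iff₀ hk0] at hr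
        have : (1 - 1 / (k : ℝ)) * (OPT - g n)
            = (OPT - g n) - (OPT - g n) / k := by ring
        rw [this]
        have hd : (OPT - g n) / ↑k ≤ g (n+1) - g n := hrec n hn
        linarith
      calc OPT - g (n + 1) ≤ (1 - 1 / (k : ℝ)) * (OPT - g n) := this
        _ ≤ (1 - 1 / (k : ℝ)) * ((1 - 1 / (k : ℝ)) ^ n * OPT) :=
            mul_le_mul_of_nonneg_left ihn hq0
        _ = (1 - 1 / (k : ℝ)) ^ (n + 1) * OPT := by ring
  constructor
  · have := key k le_rfl
    linarith
  · have hexp : (1 - 1 / (k : ℝ)) ^ k ≤ 1 / Real.exp 1 := by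
      have h1 : (1 - 1 / (k : ℝ)) ≤ Real.exp (-(1 / (k : ℝ))) := by
        have := Real.add_one_le_exp (-(1 / (k : ℝ)))
        linarith
      calc (1 - 1 / (k : ℝ)) ^ k ≤ (Real.exp (-(1 / (k : ℝ)))) ^ k :=
            pow_le_pow_left₀ hq0 h1 k
        _ = Real.exp (-(1 / (k : ℝ)) * k) := by rw [← Real.exp_nat_mul]; ring_nf
        _ = Real.exp (-1) := by
            congr 1
            field_simp
        _ = 1 / Real.exp 1 := by rw [Real.exp_neg]; ring
    have := mul_le_mul_of_nonneg_right (sub_le_sub_left hexp 1) hOPT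
    linarith
end
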